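/- For every 0 ≤ p < 1/2, the following identity holds: (1/2 − p) · Σ_{k=0}^∞ ((1−p)/2)^k · Σ_{j=0}^k (binom(k,j))² · (p/(1−p))^j = 1; in particular the double series converges. -/

import Mathlib

/-!
Write `q = 1 - p`. After clearing denominators the `k`-th term is `2⁻ᵏ ∑ⱼ C(k,j)² pʲ qᵏ⁻ʲ`, and
expanding `C(k,j) = ∑ₘ C(j,m) C(k-j,m)` and regrouping by `m` gives, for any `a, b`,
`∑ⱼ C(k,j)² aʲ bᵏ⁻ʲ = ∑ₘ C(k,2m) C(2m,m) (ab)ᵐ (a+b)ᵏ⁻²ᵐ`; here `a + b = 1`.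
All terms are nonnegative, so the double series may be summed over `k` first:
`∑ₖ C(k,2m) 2⁻ᵏ = 2`, leaving `2 ∑ₘ C(2m,m) (pq)ᵐ = 2 / √(1 - 4pq) = 2 / (1 - 2p)` by the
binomial series of `(1 - 4x)^(-1/2)`.
-/

open Finset

theorem Nat.add_choose_eq_sum_choose_mul_choose (j l : ℕ) :
    (j + l).choose j = ∑ m ∈ range (j + 1), j.choose m * l.choose m := by
  rw [Nat.add_choose_eq, ← Nat.sum_antidiagonal_swap, Nat.sum_antidiagonal_eq_sum_range_succ_mk]
  refine sum_congr rfl fun m hm ↦ ?_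
  rw [Prod.swap_prod_mk, Nat.choose_symm (by simpa [Nat.lt_succ_iff] using hm), mul_comm]

theorem Nat.choose_mul_choose_mul_choose (m i i' : ℕ) :
    (2 * m + (i + i')).choose (m + i) * (m + i).choose m * (m + i').choose m =
      (2 * m + (i + i')).choose (2 * m) * (2 * m).choose m * (i + i').choose i := by
  apply Nat.cast_injective (R := ℚ)
  push_cast
  rw [Nat.cast_add_choose ℚ (a := 2 * m), show 2 * m + (i + i') = m + i + (m + i') by ring,
    Nat.cast_add_choose ℚ (a := m + i), two_mul, Nat.cast_add_choose ℚ (a := m) (b := m),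
    Nat.cast_add_choose ℚ (a := m) (b := i), Nat.cast_add_choose ℚ (a := m) (b := i'),
    Nat.cast_add_choose ℚ (a := i)]
  field_simp

section CommSemiring

variable {R : Type*} [CommSemiring R]

theorem sum_antidiagonal_choose_mul_choose_mul_choose (a b : R) (k m : ℕ) :
    ∑ ij ∈ antidiagonal k,
        (k.choose ij.1 * ij.1.choose m * ij.2.choose m : R) * a ^ ij.1 * b ^ ij.2 =
      k.choose (2 * m) * (2 * m).choose m * (a * b) ^ m * (a + b) ^ (k - 2 * m) := by
  rcases lt_or_ge k (2 * m) with hk | hk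
  · rw [Nat.choose_eq_zero_of_lt hk, Nat.cast_zero, zero_mul, zero_mul, zero_mul]
    refine sum_eq_zero fun ij hij ↦ ?_
    rw [HasAntidiagonal.mem_antidiagonal] at hij
    rcases lt_or_ge ij.1 m with h | h
    · simp [Nat.choose_eq_zero_of_lt h]
    · simp [Nat.choose_eq_zero_of_lt (show ij.2 < m by omega)]
  obtain ⟨n, rfl⟩ := Nat.exists_eq_add_of_le hk
  let shift : ℕ × ℕ → ℕ × ℕ := fun ii' ↦ (m + ii'.1, m + ii'.2)
  have hsub : (antidiagonal n).image shift ⊆ antidiagonal (2 * m + n) := by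
    intro ij hij
    simp only [mem_image, HasAntidiagonal.mem_antidiagonal] at hij ⊢
    obtain ⟨⟨i, i'⟩, hii', rfl⟩ := hij
    simp only [shift]
    omega
  have hinj : Set.InjOn shift (antidiagonal n) := fun x _ y _ h ↦
    Prod.ext_iff.mpr (by simpa [shift] using h)
  rw [← sum_subset hsub, sum_image hinj, Nat.add_sub_cancel_left, (Commute.all a b).add_pow',
    mul_sum]
  · refine sum_congr rfl fun ⟨i, i'⟩ hii' ↦ ?_
    rw [HasAntidiagonal.mem_antidiagonal] at hii'
    subst hii'
    have key := congrArg (Nat.cast (R := R)) (Nat.choose_mul_choose_mul_choose m i i')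
    push_cast at key
    simp only [shift, nsmul_eq_mul, key]
    ring
  · rintro ⟨j, l⟩ hjl hmap
    rw [HasAntidiagonal.mem_antidiagonal] at hjl
    rcases lt_or_ge j m with h | hj
    · simp [Nat.choose_eq_zero_of_lt h]
    rcases lt_or_ge l m with h | hl
    · simp [Nat.choose_eq_zero_of_lt h]
    refine absurd (mem_image.mpr ⟨(j - m, l - m), ?_, ?_⟩) hmap
    · rw [HasAntidiagonal.mem_antidiagonal]; omega
    · simp only [shift, Prod.mk.injEq]; omega

theorem sum_antidiagonal_choose_sq_mul_pow_mul_pow (a b : R) (k : ℕ) :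
    ∑ ij ∈ antidiagonal k, (k.choose ij.1 : R) ^ 2 * a ^ ij.1 * b ^ ij.2 =
      ∑ m ∈ range (k + 1),
        k.choose (2 * m) * (2 * m).choose m * (a * b) ^ m * (a + b) ^ (k - 2 * m) := by
  have hvandermonde : ∀ ij ∈ antidiagonal k, k.choose ij.1 =
      ∑ m ∈ range (k + 1), ij.1.choose m * ij.2.choose m := by
    rintro ⟨j, l⟩ hjl
    rw [HasAntidiagonal.mem_antidiagonal] at hjl
    subst hjl
    rw [Nat.add_choose_eq_sum_choose_mul_choose]
    refine sum_subset (range_subset_range.mpr (by omega)) fun m _ hm ↦ ?_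
    rw [Nat.choose_eq_zero_of_lt (by simpa using hm), zero_mul]
  calc ∑ ij ∈ antidiagonal k, (k.choose ij.1 : R) ^ 2 * a ^ ij.1 * b ^ ij.2
      = ∑ ij ∈ antidiagonal k, ∑ m ∈ range (k + 1),
          (k.choose ij.1 * ij.1.choose m * ij.2.choose m : R) * a ^ ij.1 * b ^ ij.2 := by
        refine sum_congr rfl fun ij hij ↦ ?_
        rw [sq]
        nth_rw 2 [hvandermonde ij hij]
        push_cast
        simp only [mul_sum, sum_mul, mul_assoc]
    _ = _ := by
        rw [sum_comm]
        exact sum_congr rfl fun m _ ↦ sum_antidiagonal_choose_mul_choose_mul_choose a b k m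

end CommSemiring

theorem pow_mul_sum_range_mul_div_pow {K : Type*} [Field K] {q : K} (hq : q ≠ 0) (p : K)
    (c : ℕ → K) (k : ℕ) :
    q ^ k * ∑ j ∈ range (k + 1), c j * (p / q) ^ j =
      ∑ ij ∈ antidiagonal k, c ij.1 * p ^ ij.1 * q ^ ij.2 := by
  rw [Nat.sum_antidiagonal_eq_sum_range_succ (fun j l ↦ c j * p ^ j * q ^ l), mul_sum]
  refine sum_congr rfl fun j hj ↦ ?_
  rw [div_pow, ← pow_sub_mul_pow q (Nat.le_of_lt_succ (mem_range.mp hj))]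
  field_simp

theorem Ring.choose_neg_half_mul_neg_four_pow {K : Type*} [Field K] [CharZero K] (n : ℕ) :
    Ring.choose (-(1 / 2) : K) n * (-4) ^ n = n.centralBinom := by
  induction n with
  | zero => simp
  | succ n ih =>
    have hrec := Ring.choose_smul_choose (-(1 / 2) : K) (Nat.le_add_right n 1)
    rw [Nat.choose_succ_self_right, Nat.add_sub_cancel_left, Ring.choose_one_right,
      nsmul_eq_mul] at hrec
    have hcb : ((n + 1 : ℕ) : K) * (n + 1).centralBinom = 2 * (2 * n + 1) * n.centralBinom := by
      exact_mod_cast Nat.succ_mul_centralBinom_succ n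
    have hn : ((n + 1 : ℕ) : K) ≠ 0 := Nat.cast_ne_zero.mpr n.succ_ne_zero
    apply mul_left_cancel₀ hn
    rw [hcb, ← ih, ← mul_assoc, hrec]
    ring

theorem hasSum_centralBinom_mul_pow {x : ℝ} (hx : |4 * x| < 1) :
    HasSum (fun n ↦ (n.centralBinom : ℝ) * x ^ n) (√(1 - 4 * x))⁻¹ := by
  have hy : -4 * x ∈ Metric.eball (0 : ℝ) 1 := by
    rw [Metric.mem_eball, edist_zero_right, ← ofReal_norm, ENNReal.ofReal_lt_one]
    simpa [abs_mul] using hx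
  have h := Real.one_add_rpow_hasFPowerSeriesOnBall_zero (a := -(1 / 2)).hasSum hy
  simp only [binomialSeries, FormalMultilinearSeries.ofScalars_apply_eq, smul_eq_mul] at h
  have hterm : ∀ n : ℕ,
      Ring.choose (-(1 / 2) : ℝ) n * (-4 * x) ^ n = n.centralBinom * x ^ n := by
    intro n
    rw [← Ring.choose_neg_half_mul_neg_four_pow, mul_pow, mul_assoc]
  have hval : (1 + (0 + -4 * x)) ^ (-(1 / 2) : ℝ) = (√(1 - 4 * x))⁻¹ := by
    rw [Real.sqrt_eq_rpow, ← Real.rpow_neg (by linarith [le_abs_self (4 * x)])]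
    ring_nf
  simpa only [hterm, hval] using h

theorem hasSum_centralBinom_mul_pow_mul_one_sub {p : ℝ} (hp0 : 0 ≤ p) (hp : p < 1 / 2) :
    HasSum (fun n ↦ (n.centralBinom : ℝ) * (p * (1 - p)) ^ n) (1 - 2 * p)⁻¹ := by
  have h := hasSum_centralBinom_mul_pow (x := p * (1 - p)) (by
    rw [abs_of_nonneg (by nlinarith)]; nlinarith)
  rwa [show 1 - 4 * (p * (1 - p)) = (1 - 2 * p) ^ 2 by ring, Real.sqrt_sq (by linarith)] at h

theorem hasSum_choose_mul_pow_of_norm_lt_one {𝕜 : Type*} [NormedField 𝕜]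
    [HasSummableGeomSeries 𝕜] (k : ℕ) {r : 𝕜} (hr : ‖r‖ < 1) :
    HasSum (fun n ↦ (n.choose k : 𝕜) * r ^ n) (r ^ k / (1 - r) ^ (k + 1)) := by
  rw [← hasSum_nat_add_iff' k,
    sum_eq_zero fun i hi ↦ by simp [Nat.choose_eq_zero_of_lt (mem_range.mp hi)], sub_zero,
    div_eq_mul_one_div]
  have hshift : (fun n ↦ ((n + k).choose k : 𝕜) * r ^ (n + k)) =
      fun n ↦ r ^ k * (((n + k).choose k : 𝕜) * r ^ n) := funext fun n ↦ by ring
  rw [hshift]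
  exact (hasSum_choose_mul_geometric_of_norm_lt_one k hr).mul_left (r ^ k)

theorem hasSum_choose_mul_half_pow (r : ℕ) :
    HasSum (fun n ↦ (n.choose r : ℝ) * (1 / 2) ^ n) 2 := by
  have h := hasSum_choose_mul_pow_of_norm_lt_one r (r := (1 / 2 : ℝ)) (by norm_num)
  rwa [show (1 / 2 : ℝ) ^ r / (1 - 1 / 2) ^ (r + 1) = 2 by rw [pow_succ]; field_simp; ring] at h

theorem HasSum.tsum_comm_of_nonneg {β γ : Type*} {G : β × γ → ℝ} (hG : 0 ≤ G) {c : γ → ℝ}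
    {a : ℝ} (hcol : ∀ m, HasSum (fun k ↦ G (k, m)) (c m)) (hc : HasSum c a) :
    HasSum (fun k ↦ ∑' m, G (k, m)) a := by
  have hswap : Summable (G ∘ Prod.swap) :=
    (summable_prod_of_nonneg (f := G ∘ Prod.swap) fun _ ↦ hG _).mpr
      ⟨fun m ↦ (hcol m).summable, by
        simpa only [Function.comp_apply, Prod.swap_prod_mk, (hcol _).tsum_eq] using hc.summable⟩
  have hsum : Summable G := (Equiv.prodComm γ β).summable_iff.mp hswap
  have htot : HasSum G a := by
    have h := hswap.hasSum
    rw [← hc.unique (h.prod_fiberwise hcol)] at h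
    exact (Equiv.prodComm γ β).hasSum_iff.mp h
  exact htot.prod_fiberwise fun k ↦ (hsum.prod_factor k).hasSum

theorem stmt_19 (p : ℝ) (hp0 : 0 ≤ p) (hp : p < 1 / 2) :
    Summable (fun k : ℕ => ((1 - p) / 2) ^ k *
      ∑ j ∈ Finset.range (k + 1), ((k.choose j : ℝ)) ^ 2 * (p / (1 - p)) ^ j) ∧
    (1 / 2 - p) * ∑' k : ℕ, ((1 - p) / 2) ^ k *
      ∑ j ∈ Finset.range (k + 1), ((k.choose j : ℝ)) ^ 2 * (p / (1 - p)) ^ j = 1 := by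
  have hq : 0 < 1 - p := by linarith
  set G : ℕ × ℕ → ℝ := fun km ↦
    (km.2.centralBinom : ℝ) * (p * (1 - p)) ^ km.2 * (km.1.choose (2 * km.2) * (1 / 2) ^ km.1)
  have hG : 0 ≤ G := fun km ↦ by positivity
  have hrow : ∀ k : ℕ, ((1 - p) / 2) ^ k *
      ∑ j ∈ range (k + 1), (k.choose j : ℝ) ^ 2 * (p / (1 - p)) ^ j = ∑' m, G (k, m) := by
    intro k
    rw [tsum_eq_sum (s := range (k + 1)) fun m hm ↦ ?_]
    · rw [div_eq_mul_one_div, mul_pow, mul_right_comm, pow_mul_sum_range_mul_div_pow hq.ne',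
        sum_antidiagonal_choose_sq_mul_pow_mul_pow, add_sub_cancel, sum_mul]
      refine sum_congr rfl fun m _ ↦ ?_
      simp only [G, Nat.centralBinom_eq_two_mul_choose, one_pow]
      ring
    · simp [G, Nat.choose_eq_zero_of_lt (show k < 2 * m by rw [mem_range] at hm; omega)]
  have hcol : ∀ m : ℕ,
      HasSum (fun k ↦ G (k, m)) (m.centralBinom * (p * (1 - p)) ^ m * 2) :=
    fun m ↦ (hasSum_choose_mul_half_pow (2 * m)).mul_left _
  have hsum := HasSum.tsum_comm_of_nonneg hG hcol
    ((hasSum_centralBinom_mul_pow_mul_one_sub hp0 hp).mul_right 2)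
  rw [← funext hrow] at hsum
  refine ⟨hsum.summable, ?_⟩
  rw [hsum.tsum_eq]
  field_simp [show 1 - 2 * p ≠ 0 by linarith]
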